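/- For any initial point (α⁰,β⁰) ∈ Δ, the iterates (α^{(m)},β^{(m)}) = F^m(α⁰,β⁰) satisfy lim_{m→∞} α^{(m)} = 0 and lim_{m→∞} β^{(m)} = 0. -/

import Mathlib

noncomputable def Fop : ℝ × ℝ → ℝ × ℝ := fun p =>
  ((6*p.2 + 3*p.1 + 4*p.1*p.2)/(6 + 3*p.1),
   (3*p.1 + 4*p.1*p.2)/(6 + 6*p.2 + 3*p.1 + 4*p.1*p.2))

def Dset : Set (ℝ × ℝ) := {p | 0 ≤ p.1 ∧ p.1 ≤ 4 ∧ 0 ≤ p.2 ∧ p.2 ≤ 1}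

noncomputable def Wly : ℝ × ℝ → ℝ := fun p => p.1 + p.2 + 2/3 * p.1 * p.2

lemma Fop_mem (p : ℝ × ℝ) (hp : p ∈ Dset) : Fop p ∈ Dset := by
  obtain ⟨ha0, ha4, hb0, hb1⟩ := hp
  have hd1 : (0:ℝ) < 6 + 3*p.1 := by linarith
  have hd2 : (0:ℝ) < 6 + 6*p.2 + 3*p.1 + 4*p.1*p.2 := by nlinarith
  refine ⟨?_, ?_, ?_, ?_⟩ <;> simp only [Fop]
  · exact div_nonneg (by nlinarith) hd1.le
  · rw [div_le_iff₀ hd1]; nlinarith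
  · exact div_nonneg (by nlinarith) hd2.le
  · rw [div_le_one hd2]; nlinarith

lemma Fop_snd_le (p : ℝ × ℝ) (hp : p ∈ Dset) : (Fop p).2 ≤ 7/6 * p.1 := by
  obtain ⟨ha0, ha4, hb0, hb1⟩ := hp
  have hd2 : (0:ℝ) < 6 + 6*p.2 + 3*p.1 + 4*p.1*p.2 := by nlinarith
  show (3*p.1 + 4*p.1*p.2)/(6 + 6*p.2 + 3*p.1 + 4*p.1*p.2) ≤ 7/6 * p.1
  rw [div_le_iff₀ hd2]
  nlinarith [mul_nonneg ha0 hb0, sq_nonneg p.1,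
    mul_nonneg (mul_nonneg ha0 ha0) hb0]

lemma Wly_nonneg (p : ℝ × ℝ) (hp : p ∈ Dset) : 0 ≤ Wly p := by
  obtain ⟨ha0, ha4, hb0, hb1⟩ := hp
  unfold Wly; nlinarith

lemma Wly_key (p : ℝ × ℝ) (hp : p ∈ Dset) :
    Wly (Fop p) + p.1^2/60 ≤ Wly p := by
  obtain ⟨ha0, ha4, hb0, hb1⟩ := hp
  have hd1 : (0:ℝ) < 6 + 3*p.1 := by linarith
  have hd2 : (0:ℝ) < 6 + 6*p.2 + 3*p.1 + 4*p.1*p.2 := by nlinarith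
  have hkey : Wly p - (Wly (Fop p) + p.1^2/60) =
      (120*p.1*p.2^2 + 684*p.1^2 + 1344*p.1^2*p.2 + 800*p.1^2*p.2^2 + 504*p.1^3
        + 1038*p.1^3*p.2 + 480*p.1^3*p.2^2 - 9*p.1^4 - 12*p.1^4*p.2)
        / (60 * ((6 + 3*p.1) * (6 + 6*p.2 + 3*p.1 + 4*p.1*p.2))) := by
    simp only [Wly, Fop]
    field_simp
    ring
  have h16 : 0 ≤ p.1^2 * ((4 - p.1) * (4 + p.1)) :=
    mul_nonneg (sq_nonneg _) (mul_nonneg (by linarith) (by linarith))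
  have hnum : 0 ≤ 120*p.1*p.2^2 + 684*p.1^2 + 1344*p.1^2*p.2 + 800*p.1^2*p.2^2
      + 504*p.1^3 + 1038*p.1^3*p.2 + 480*p.1^3*p.2^2 - 9*p.1^4 - 12*p.1^4*p.2 := by
    nlinarith [h16, mul_nonneg h16 hb0, mul_nonneg ha0 hb0, sq_nonneg p.1,
      mul_nonneg (mul_nonneg ha0 hb0) hb0, mul_nonneg (mul_nonneg ha0 ha0) hb0,
      mul_nonneg (mul_nonneg (mul_nonneg ha0 ha0) hb0) hb0,
      mul_nonneg (mul_nonneg (mul_nonneg ha0 ha0) ha0) hb0,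
      mul_nonneg (mul_nonneg (mul_nonneg (mul_nonneg ha0 ha0) ha0) hb0) hb0,
      mul_nonneg (mul_nonneg ha0 ha0) ha0]
  have hden : (0:ℝ) < 60 * ((6 + 3*p.1) * (6 + 6*p.2 + 3*p.1 + 4*p.1*p.2)) := by positivity
  have := div_nonneg hnum hden.le
  rw [← hkey] at this
  linarith

theorem stmt15 : ∀ p ∈ Dset,
    Filter.Tendsto (fun m => (Fop^[m] p).1) Filter.atTop (nhds 0) ∧
    Filter.Tendsto (fun m => (Fop^[m] p).2) Filter.atTop (nhds 0) := by
  intro p hp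
  set q : ℕ → ℝ × ℝ := fun m => Fop^[m] p with hq
  have hmem : ∀ m, q m ∈ Dset := by
    intro m
    induction m with
    | zero => exact hp
    | succ n ih =>
      have : q (n+1) = Fop (q n) := by
        simp [hq, Function.iterate_succ_apply']
      rw [this]; exact Fop_mem _ ih
  have hstep : ∀ m, q (m+1) = Fop (q m) := by
    intro m; simp [hq, Function.iterate_succ_apply']
  -- partial sums of (q m).1^2/60 bounded by Wly p
  have hsum : ∀ n, ∑ i ∈ Finset.range n, (q i).1^2/60 + Wly (q n) ≤ Wly p := by
    intro n
    induction n with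
    | zero => simp [hq]
    | succ n ih =>
      rw [Finset.sum_range_succ]
      have := Wly_key (q n) (hmem n)
      rw [← hstep n] at this
      linarith
  have hsum' : ∀ n, ∑ i ∈ Finset.range n, (q i).1^2/60 ≤ Wly p := by
    intro n
    have := Wly_nonneg (q n) (hmem n)
    linarith [hsum n]
  have hsummable : Summable (fun m => (q m).1^2/60) :=
    summable_of_sum_range_le (fun m => by positivity) hsum'
  have hsq : Filter.Tendsto (fun m => (q m).1^2) Filter.atTop (nhds 0) := by
    have := hsummable.tendsto_atTop_zero
    have h2 := this.const_mul (60:ℝ)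
    simp only [mul_zero] at h2
    convert h2 using 2 with m
    ring
  have ha : Filter.Tendsto (fun m => (q m).1) Filter.atTop (nhds 0) := by
    have hs : Filter.Tendsto (fun m => Real.sqrt ((q m).1^2)) Filter.atTop (nhds 0) := by
      have := (Real.continuous_sqrt.tendsto 0).comp hsq
      simpa [Function.comp_def] using this
    refine hs.congr (fun m => ?_)
    exact Real.sqrt_sq (hmem m).1
  refine ⟨ha, ?_⟩
  have hb' : Filter.Tendsto (fun m => (q (m+1)).2) Filter.atTop (nhds 0) := by
    have hle : ∀ m, (q (m+1)).2 ≤ 7/6 * (q m).1 := by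
      intro m; rw [hstep m]; exact Fop_snd_le _ (hmem m)
    have hub : Filter.Tendsto (fun m => 7/6 * (q m).1) Filter.atTop (nhds 0) := by
      have := ha.const_mul (7/6 : ℝ)
      simpa using this
    exact tendsto_of_tendsto_of_tendsto_of_le_of_le tendsto_const_nhds hub
      (fun m => (hmem (m+1)).2.2.1) hle
  exact (Filter.tendsto_add_atTop_iff_nat 1).mp hb'
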